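/- Identification of the generalized local average controlled direct effect with peer treatment fixed at 1 (Theorem 3.1, item 2, d = 1): let 0 ≤ p₀ < p₀' ≤ 1 and 0 ≤ p₁ ≤ 1 with ℙ(p₀ < V₀ ≤ p₀' and V₁ ≤ p₁) > 0. Then C(p₀',p₁) − C(p₀,p₁) = ℙ(p₀ < V₀ ≤ p₀' and V₁ ≤ p₁), and (G¹(p₀',p₁) − G¹(p₀,p₁)) / (C(p₀',p₁) − C(p₀,p₁)) = 𝔼[ m(1,1,U) − m(0,1,U) | p₀ < V₀ ≤ p₀' and V₁ ≤ p₁ ], the local average controlled direct effect LACDE^{(1)} for the subpopulation {p₀ < V₀ ≤ p₀', V₁ ≤ p₁}. -/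
import Mathlib


open MeasureTheory ProbabilityTheory

/-- Identification of the generalized local average controlled direct effect with peer
treatment fixed at 1 (Theorem 3.1, item 2, d = 1). -/
theorem lacde_one_identification
    {Ω 𝒰 : Type*} [MeasurableSpace Ω] [MeasurableSpace 𝒰]
    (μ : Measure Ω) [IsProbabilityMeasure μ]
    (U : Ω → 𝒰) (V₀ V₁ : Ω → ℝ)
    (hU : Measurable U) (hV₀ : Measurable V₀) (hV₁ : Measurable V₁)
    -- V₀, V₁ uniformly distributed on (0,1)
    (hV₀unif : Measure.map V₀ μ = volume.restrict (Set.Ioo (0:ℝ) 1))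
    (hV₁unif : Measure.map V₁ μ = volume.restrict (Set.Ioo (0:ℝ) 1))
    -- bounded measurable outcome function (`true` codes treatment 1, `false` codes 0)
    (m : Bool → Bool → 𝒰 → ℝ) (hm : ∀ d d', Measurable (m d d'))
    (hm_bdd : ∃ B, ∀ d d' u, |m d d' u| ≤ B)
    -- the copula of (V₀, V₁)
    (C : ℝ → ℝ → ℝ)
    (hC : ∀ p q, C p q = (μ {ω | V₀ ω ≤ p ∧ V₁ ω ≤ q}).toReal)
    -- identified conditional-mean function G¹
    (G1 : ℝ → ℝ → ℝ)
    (hG1 : ∀ p q, G1 p q =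
      (∫ ω, m true true (U ω) * (if V₀ ω ≤ p then (1:ℝ) else 0)
        * (if V₁ ω ≤ q then (1:ℝ) else 0) ∂μ)
      + ∫ ω, m false true (U ω) * (if p < V₀ ω then (1:ℝ) else 0)
        * (if V₁ ω ≤ q then (1:ℝ) else 0) ∂μ)
    -- the propensity-score values
    (p₀ p₀' p₁ : ℝ) (hp₀0 : 0 ≤ p₀) (hp₀lt : p₀ < p₀') (hp₀'1 : p₀' ≤ 1)
    (hp₁0 : 0 ≤ p₁) (hp₁1 : p₁ ≤ 1)
    -- the conditioning subpopulation {p₀ < V₀ ≤ p₀', V₁ ≤ p₁} has positive probability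
    (E : Set Ω) (hE : E = {ω | p₀ < V₀ ω ∧ V₀ ω ≤ p₀' ∧ V₁ ω ≤ p₁})
    (hEpos : 0 < μ E) :
    C p₀' p₁ - C p₀ p₁ = (μ E).toReal ∧
    (G1 p₀' p₁ - G1 p₀ p₁) / (C p₀' p₁ - C p₀ p₁)
      = (∫ ω in E, (m true true (U ω) - m false true (U ω)) ∂μ) / (μ E).toReal := by

  obtain ⟨B, hB⟩ := hm_bdd
  have hEmeas : MeasurableSet E := by
    rw [hE]
    exact (measurableSet_lt measurable_const hV₀).inter
      ((measurableSet_le hV₀ measurable_const).inter (measurableSet_le hV₁ measurable_const))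
  -- Part 1
  set A : Set Ω := {ω | V₀ ω ≤ p₀ ∧ V₁ ω ≤ p₁} with hA
  set A' : Set Ω := {ω | V₀ ω ≤ p₀' ∧ V₁ ω ≤ p₁} with hA'
  have hunion : A' = A ∪ E := by
    ext ω
    simp only [hA, hA', hE, Set.mem_setOf_eq, Set.mem_union]
    constructor
    · rintro ⟨h1, h2⟩
      by_cases h : V₀ ω ≤ p₀
      · exact Or.inl ⟨h, h2⟩
      · exact Or.inr ⟨lt_of_not_ge h, h1, h2⟩
    · rintro (⟨h1, h2⟩ | ⟨h1, h2, h3⟩)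
      · exact ⟨h1.trans hp₀lt.le, h2⟩
      · exact ⟨h2, h3⟩
  have hdisj : Disjoint A E := by
    rw [Set.disjoint_left]
    rintro ω ⟨h1, _⟩
    rw [hE]
    rintro ⟨h2, _⟩
    exact absurd (h2.trans_le h1) (lt_irrefl p₀)
  have hmeasadd : μ A' = μ A + μ E := by
    rw [hunion, measure_union hdisj hEmeas]
  have part1 : C p₀' p₁ - C p₀ p₁ = (μ E).toReal := by
    rw [hC, hC]
    show (μ A').toReal - (μ A).toReal = (μ E).toReal
    rw [hmeasadd, ENNReal.toReal_add (measure_ne_top μ A) (measure_ne_top μ E)]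
    ring
  refine ⟨part1, ?_⟩
  -- Part 2: integrability helper
  have hint : ∀ (φ : Ω → ℝ), Measurable φ → (∀ ω, |φ ω| ≤ B) → Integrable φ μ := by
    intro φ hφ hbd
    refine ⟨hφ.aestronglyMeasurable, ?_⟩
    exact MeasureTheory.HasFiniteIntegral.of_bounded (C := B) (Filter.Eventually.of_forall hbd)
  have hmul_bd : ∀ (x : ℝ) (a b : Prop) [Decidable a] [Decidable b], |x| ≤ B →
      |x * (if a then (1:ℝ) else 0) * (if b then (1:ℝ) else 0)| ≤ B := by
    intro x a b _ _ hx
    have hB0 : 0 ≤ B := le_trans (abs_nonneg x) hx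
    split_ifs <;> simp [abs_mul, hx, hB0]
  have hmeas_ind : ∀ (d d' : Bool) (W : Ω → ℝ) (p : ℝ) (q : ℝ), Measurable W →
      Measurable (fun ω => m d d' (U ω) * (if W ω ≤ p then (1:ℝ) else 0)
        * (if V₁ ω ≤ q then (1:ℝ) else 0)) := by
    intro d d' W p q hW
    exact (((hm d d').comp hU).mul
      (Measurable.ite (measurableSet_le hW measurable_const) measurable_const measurable_const)).mul
      (Measurable.ite (measurableSet_le hV₁ measurable_const) measurable_const measurable_const)
  have hmeas_ind' : ∀ (d d' : Bool) (p : ℝ) (q : ℝ),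
      Measurable (fun ω => m d d' (U ω) * (if p < V₀ ω then (1:ℝ) else 0)
        * (if V₁ ω ≤ q then (1:ℝ) else 0)) := by
    intro d d' p q
    exact (((hm d d').comp hU).mul
      (Measurable.ite (measurableSet_lt measurable_const hV₀) measurable_const measurable_const)).mul
      (Measurable.ite (measurableSet_le hV₁ measurable_const) measurable_const measurable_const)
  have i1 : Integrable (fun ω => m true true (U ω) * (if V₀ ω ≤ p₀' then (1:ℝ) else 0)
      * (if V₁ ω ≤ p₁ then (1:ℝ) else 0)) μ :=
    hint _ (hmeas_ind true true V₀ p₀' p₁ hV₀) (fun ω => hmul_bd _ _ _ (hB _ _ _))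
  have i2 : Integrable (fun ω => m false true (U ω) * (if p₀' < V₀ ω then (1:ℝ) else 0)
      * (if V₁ ω ≤ p₁ then (1:ℝ) else 0)) μ :=
    hint _ (hmeas_ind' false true p₀' p₁) (fun ω => hmul_bd _ _ _ (hB _ _ _))
  have i3 : Integrable (fun ω => m true true (U ω) * (if V₀ ω ≤ p₀ then (1:ℝ) else 0)
      * (if V₁ ω ≤ p₁ then (1:ℝ) else 0)) μ :=
    hint _ (hmeas_ind true true V₀ p₀ p₁ hV₀) (fun ω => hmul_bd _ _ _ (hB _ _ _))
  have i4 : Integrable (fun ω => m false true (U ω) * (if p₀ < V₀ ω then (1:ℝ) else 0)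
      * (if V₁ ω ≤ p₁ then (1:ℝ) else 0)) μ :=
    hint _ (hmeas_ind' false true p₀ p₁) (fun ω => hmul_bd _ _ _ (hB _ _ _))
  have key : G1 p₀' p₁ - G1 p₀ p₁
      = ∫ ω in E, (m true true (U ω) - m false true (U ω)) ∂μ := by
    rw [hG1, hG1]
    have comb : (∫ ω, m true true (U ω) * (if V₀ ω ≤ p₀' then (1:ℝ) else 0)
          * (if V₁ ω ≤ p₁ then (1:ℝ) else 0) ∂μ)
        + (∫ ω, m false true (U ω) * (if p₀' < V₀ ω then (1:ℝ) else 0)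
          * (if V₁ ω ≤ p₁ then (1:ℝ) else 0) ∂μ)
        - ((∫ ω, m true true (U ω) * (if V₀ ω ≤ p₀ then (1:ℝ) else 0)
          * (if V₁ ω ≤ p₁ then (1:ℝ) else 0) ∂μ)
        + (∫ ω, m false true (U ω) * (if p₀ < V₀ ω then (1:ℝ) else 0)
          * (if V₁ ω ≤ p₁ then (1:ℝ) else 0) ∂μ))
        = ∫ ω, E.indicator (fun ω => m true true (U ω) - m false true (U ω)) ω ∂μ := by
      have isum1 : Integrable (fun ω => m true true (U ω) * (if V₀ ω ≤ p₀' then (1:ℝ) else 0)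
          * (if V₁ ω ≤ p₁ then (1:ℝ) else 0) + m false true (U ω) * (if p₀' < V₀ ω then (1:ℝ) else 0)
          * (if V₁ ω ≤ p₁ then (1:ℝ) else 0)) μ := i1.add i2
      have isum2 : Integrable (fun ω => m true true (U ω) * (if V₀ ω ≤ p₀ then (1:ℝ) else 0)
          * (if V₁ ω ≤ p₁ then (1:ℝ) else 0) + m false true (U ω) * (if p₀ < V₀ ω then (1:ℝ) else 0)
          * (if V₁ ω ≤ p₁ then (1:ℝ) else 0)) μ := i3.add i4
      rw [← integral_add i1 i2, ← integral_add i3 i4, ← integral_sub isum1 isum2]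
      apply integral_congr_ae
      apply Filter.Eventually.of_forall
      intro ω
      simp only [Set.indicator, hE, Set.mem_setOf_eq]
      by_cases h1 : V₁ ω ≤ p₁
      · by_cases h2 : V₀ ω ≤ p₀
        · have h3 : V₀ ω ≤ p₀' := h2.trans hp₀lt.le
          have h4 : ¬ p₀ < V₀ ω := not_lt.mpr h2
          have h5 : ¬ p₀' < V₀ ω := not_lt.mpr h3
          simp [h1, h2, h3, h4, h5]
        · have h2' : p₀ < V₀ ω := lt_of_not_ge h2
          by_cases h3 : V₀ ω ≤ p₀'
          · have h5 : ¬ p₀' < V₀ ω := not_lt.mpr h3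
            simp [h1, h2, h2', h3, h5]
          · have h3' : p₀' < V₀ ω := lt_of_not_ge h3
            simp [h1, h2, h2', h3, h3']
      · simp [h1]
    rw [comb, integral_indicator hEmeas]
  rw [key, part1]
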